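/- arXiv:2107.02776 — 5 statements merged into one kernel-verified Lean document; each statement's English description precedes it below -/
import Mathlib

section
/- If the budget is at least the remaining horizon, the constrained value equals the unconstrained optimal value: for all s and r, if c ≥ r then h(s, r, c) = V(s, r), where V is the standard finite-horizon optimal value function V(s,0)=0, V(s,r)=max_{a∈A} [R(s,a) + Σ_{s'} P_{T-r}(s'|s,a) V(s',r-1)]. -/
open Finset

/-- The budget-constrained value recursion `h` of the paper. -/
noncomputable def hval {S A : Type*} [Fintype S] [Fintype A] [Nonempty A] [DecidableEq A]
    (T : ℕ) (R : S → A → ℝ) (P : ℕ → S → A → S → ℝ) (obs : ℕ → A) :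
    ℕ → ℕ → S → ℝ
  | 0, _, _ => 0
  | r+1, 0, s =>
      R s (obs (T - (r+1))) +
        ∑ s' : S, P (T - (r+1)) s (obs (T - (r+1))) s' * hval T R P obs r 0 s'
  | r+1, c+1, s =>
      Finset.univ.sup' Finset.univ_nonempty fun a =>
        if a = obs (T - (r+1)) then
          R s a + ∑ s' : S, P (T - (r+1)) s a s' * hval T R P obs r (c+1) s'
        else
          R s a + ∑ s' : S, P (T - (r+1)) s a s' * hval T R P obs r c s'

/-- The standard (unconstrained) finite-horizon optimal value function. -/
noncomputable def Vval {S A : Type*} [Fintype S] [Fintype A] [Nonempty A]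
    (T : ℕ) (R : S → A → ℝ) (P : ℕ → S → A → S → ℝ) :
    ℕ → S → ℝ
  | 0, _ => 0
  | r+1, s =>
      Finset.univ.sup' Finset.univ_nonempty fun a =>
        R s a + ∑ s' : S, P (T - (r+1)) s a s' * Vval T R P r s'

/-- If the change budget is at least the remaining horizon, the constrained value
equals the unconstrained optimal value. -/
theorem stmt3 {S A : Type*} [Fintype S] [Fintype A] [Nonempty A] [DecidableEq A]
    (T : ℕ) (hT : 0 < T) (R : S → A → ℝ) (P : ℕ → S → A → S → ℝ) (obs : ℕ → A)
    (hPnonneg : ∀ t s a s', 0 ≤ P t s a s')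
    (hPsum : ∀ t s a, ∑ s' : S, P t s a s' = 1)
    (s : S) (r : ℕ) (c : ℕ) (hcr : r ≤ c) :
    hval T R P obs r c s = Vval T R P r s := by
  induction r generalizing s c with
  | zero => simp [hval, Vval]
  | succ r ih =>
    obtain ⟨c', rfl⟩ : ∃ c', c = c' + 1 := ⟨c - 1, by omega⟩
    have hr : r ≤ c' := by omega
    rw [hval, Vval]
    congr 1
    funext a
    by_cases h : a = obs (T - (r+1)) <;>
      simp [h, ih _ _ hr, ih _ _ (le_trans hr (Nat.le_succ _))]
end

section
/- Monotonicity of the argmax event under odds increase (discrete version of counterfactual stability for fixed noise): fix a noise realization u : S → ℝ and two probability vectors p, q on S with all entries positive. Suppose i = argmax_s (log p(s) + u(s)) is the unique maximizer, and suppose q(i)/p(i) ≥ q(s)/p(s) for all s ∈ S. Then i = argmax_s (log q(s) + u(s)). -/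
/-- Discrete counterfactual-stability for fixed noise: if `i` uniquely maximizes
`log p(s) + u(s)` and the odds `q(s)/p(s)` are maximized at `i`, then `i` is also the
(unique) maximizer of `log q(s) + u(s)`. -/
theorem stmt8 {S : Type*} [Fintype S] [Nonempty S]
    (p q : S → ℝ) (hp : ∀ s, 0 < p s) (hq : ∀ s, 0 < q s) (u : S → ℝ)
    (i : S)
    (hmax : ∀ s, s ≠ i → Real.log (p s) + u s < Real.log (p i) + u i)
    (hodds : ∀ s, q s / p s ≤ q i / p i) :
    ∀ s, s ≠ i → Real.log (q s) + u s < Real.log (q i) + u i := by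
  intro s hs
  have h1 : Real.log (q s) = Real.log (p s) + Real.log (q s / p s) := by
    rw [Real.log_div (hq s).ne' (hp s).ne']; ring
  have h2 : Real.log (q i) = Real.log (p i) + Real.log (q i / p i) := by
    rw [Real.log_div (hq i).ne' (hp i).ne']; ring
  have h3 : Real.log (q s / p s) ≤ Real.log (q i / p i) :=
    Real.log_le_log (div_pos (hq s) (hp s)) (hodds s)
  have := hmax s hs
  rw [h1, h2]; linarith
end

section
/- Contrapositive form of counterfactual stability with fixed noise: fix u : S → ℝ and positive vectors p, q on S. If i is the unique maximizer of log p(s)+u(s) and some j ≠ i maximizes log q(s)+u(s), then q(j)/p(j) > q(i)/p(i). -/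
/-- Contrapositive form of counterfactual stability with fixed noise: if `i` is the
unique maximizer of `log p(s) + u(s)` and some `j ≠ i` maximizes `log q(s) + u(s)`,
then the odds of `j` strictly increased relative to those of `i`. -/
theorem stmt9 {S : Type*} [Fintype S] [Nonempty S]
    (p q : S → ℝ) (hp : ∀ s, 0 < p s) (hq : ∀ s, 0 < q s) (u : S → ℝ)
    (i j : S) (hij : j ≠ i)
    (hmax_p : ∀ s, s ≠ i → Real.log (p s) + u s < Real.log (p i) + u i)
    (hmax_q : ∀ s, Real.log (q s) + u s ≤ Real.log (q j) + u j) :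
    q i / p i < q j / p j := by
  have h1 := hmax_p j hij
  have h2 := hmax_q i
  have hlog : Real.log (q i / p i) < Real.log (q j / p j) := by
    rw [Real.log_div (hq i).ne' (hp i).ne', Real.log_div (hq j).ne' (hp j).ne']
    linarith
  have := Real.exp_lt_exp.mpr hlog
  rwa [Real.exp_log (div_pos (hq i) (hp i)), Real.exp_log (div_pos (hq j) (hp j))] at this
end

section
/- The greedy policy extracted from the constrained value recursion achieves h: define π*((s,k−c), T−r) to be the argmax action in the recursion for h(s,r,c) (taking a_{T-r} if the keep-branch attains the max). Then for all s, r, c, the expected cumulative reward of following π* for the last r steps starting from augmented state (s, k−c) equals h(s,r,c). -/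
open Finset

/-- Expected cumulative reward of following policy `π` on the augmented state space
for the last `r` steps (i.e., from time `T − r`), starting at state `s` with change
counter `l`. -/
noncomputable def Wval {S A : Type*} [Fintype S] [DecidableEq A]
    (T : ℕ) (R : S → A → ℝ) (P : ℕ → S → A → S → ℝ) (obs : ℕ → A)
    (π : S × ℕ → ℕ → A) : ℕ → S → ℕ → ℝ
  | 0, _, _ => 0
  | r+1, s, l =>
      R s (π (s, l) (T - (r+1))) +
        ∑ s' : S, P (T - (r+1)) s (π (s, l) (T - (r+1))) s' *
          Wval T R P obs π r s'
            (l + if π (s, l) (T - (r+1)) ≠ obs (T - (r+1)) then 1 else 0)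

/-- The greedy policy extracted from the constrained value recursion achieves `h`:
if `π` always picks an action attaining the maximum in the recursion for
`h(s,r,c)` at augmented state `(s, k−c)` (taking the observed action when no budget
is left), then its expected cumulative reward over the last `r` steps from `(s, k−c)`
equals `h(s,r,c)`. -/
theorem stmt14 {S A : Type*} [Fintype S] [Fintype A] [Nonempty A] [DecidableEq A]
    (T : ℕ) (hT : 0 < T) (R : S → A → ℝ) (P : ℕ → S → A → S → ℝ) (obs : ℕ → A)
    (hPnonneg : ∀ t s a s', 0 ≤ P t s a s')
    (hPsum : ∀ t s a, ∑ s' : S, P t s a s' = 1)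
    (k : ℕ) (π : S × ℕ → ℕ → A)
    (hπ : ∀ r c s, c ≤ k →
      ((c = 0 → π (s, k) (T - (r+1)) = obs (T - (r+1))) ∧
        hval T R P obs (r+1) c s =
          (if π (s, k - c) (T - (r+1)) = obs (T - (r+1)) then
            R s (π (s, k - c) (T - (r+1))) +
              ∑ s' : S, P (T - (r+1)) s (π (s, k - c) (T - (r+1))) s' *
                hval T R P obs r c s'
          else
            R s (π (s, k - c) (T - (r+1))) +
              ∑ s' : S, P (T - (r+1)) s (π (s, k - c) (T - (r+1))) s' *
                hval T R P obs r (c - 1) s'))) :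
    ∀ r c s, c ≤ k → Wval T R P obs π r s (k - c) = hval T R P obs r c s := by
  intro r
  induction r with
  | zero => intro c s hc; simp [Wval, hval]
  | succ r ih =>
    intro c s hc
    obtain ⟨h0, heq⟩ := hπ r c s hc
    by_cases ha : π (s, k - c) (T - (r+1)) = obs (T - (r+1))
    · rw [Wval, heq, if_pos ha]
      simp only [ne_eq, ha, not_true_eq_false, if_false, add_zero]
      congr 1
      exact Finset.sum_congr rfl fun s' _ => by rw [ih c s' hc]
    · rcases Nat.eq_zero_or_pos c with hc0 | hcpos
      · exact absurd (by simpa [hc0] using h0 hc0) ha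
      rw [Wval, heq, if_neg ha]
      simp only [ne_eq, ha, not_false_iff, if_true]
      have hcount : k - c + 1 = k - (c - 1) := by omega
      rw [hcount]
      congr 1
      exact Finset.sum_congr rfl fun s' _ => by rw [ih (c-1) s' (by omega)]
end

section
/- Optimality of the constrained value (Proposition 1, one direction): for every deterministic policy π on the augmented state space that satisfies the budget constraint (π((s,k),t)=a_t for all s,t), and for all s, r ≤ T, c ≤ k, the expected cumulative reward W_π(s, k−c, T−r) of following π for the last r steps from augmented state (s, k−c) satisfies W_π(s, k−c, T−r) ≤ h(s, r, c). -/
open Finset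

/-- Optimality of the constrained value (one direction of Proposition 1): every
deterministic policy on the augmented state space that respects the budget constraint
(taking the observed action whenever the change counter equals `k`) has expected
cumulative reward at most `h`: for all `s`, `r ≤ T`, `c ≤ k`,
`W_π(s, k−c, T−r) ≤ h(s, r, c)`. -/
theorem stmt15 {S A : Type*} [Fintype S] [Fintype A] [Nonempty A] [DecidableEq A]
    (T : ℕ) (hT : 0 < T) (R : S → A → ℝ) (P : ℕ → S → A → S → ℝ) (obs : ℕ → A)
    (hPnonneg : ∀ t s a s', 0 ≤ P t s a s')
    (hPsum : ∀ t s a, ∑ s' : S, P t s a s' = 1)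
    (k : ℕ) (π : S × ℕ → ℕ → A)
    (hπ : ∀ s t, π (s, k) t = obs t) :
    ∀ r c s, r ≤ T → c ≤ k →
      Wval T R P obs π r s (k - c) ≤ hval T R P obs r c s := by
  intro r
  induction r with
  | zero => intro c s _ _; simp [Wval, hval]
  | succ r ih =>
    intro c s hr hc
    have hr' : r ≤ T := Nat.le_of_succ_le hr
    match c with
    | 0 =>
      simp only [Nat.sub_zero]
      rw [Wval, hval, hπ]
      gcongr with s' _
      · exact hPnonneg _ _ _ _
      · simp only [ne_eq, not_true_eq_false, if_false, Nat.add_zero]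
        have := ih 0 s' hr' (Nat.zero_le k)
        simpa using this
    | c+1 =>
      rw [Wval, hval]
      set a := π (s, k - (c+1)) (T - (r+1)) with ha
      refine le_trans ?_ (Finset.le_sup' _ (Finset.mem_univ a))
      by_cases hobs : a = obs (T - (r+1))
      · rw [if_pos hobs]
        gcongr with s' _
        · exact hPnonneg _ _ _ _
        · simp only [hobs, ne_eq, not_true_eq_false, if_false, Nat.add_zero]
          exact ih (c+1) s' hr' hc
      · rw [if_neg hobs]
        gcongr with s' _
        · exact hPnonneg _ _ _ _
        · simp only [ne_eq, hobs, not_false_iff, if_true]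
          have hk : k - (c+1) + 1 = k - c := by omega
          rw [hk]
          exact ih c s' hr' (Nat.le_of_succ_le hc)
end
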